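/- arXiv:math/0701275 — 3 statements merged into one kernel-verified Lean document; each statement's English description precedes it below -/
import Mathlib

section
/- Let n : (0,∞) → ℕ be a nondecreasing counting function, N(r) = ∫_{r₀}^r n(t)/t dt, and u > 0. Suppose n(r)/r^u → 0 and N(r)/r^u → 0 as r → ∞, n(r₀) = N(r₀) = 0, and ∫_{r₀}^∞ N(t)/t^{u+1} dt ≤ M. Then Σ_{j} |z_j|^{-u} ≤ u² M, where (z_j) enumerates the points counted by n (i.e., n(r) = #{j : |z_j| ≤ r}) with |z_j| > r₀. -/
/-!
Both integrations by parts are instances of Tonelli's theorem for nonnegative integrands, via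
`s ^ (-u) = u ∫_s^∞ t ^ (-(u+1)) dt`: for any measure `μ` on `(r₀, ∞)`,
`∫ s ^ (-u) dμ(s) = u ∫ μ(r₀, t] t ^ (-(u+1)) dt`.
For `μ = Σ_j δ_{|z_j|}` (that is, `dn`) this gives `Σ_j |z_j| ^ (-u) = u ∫ n(t) t ^ (-(u+1)) dt
= u ∫ (n(t)/t) t ^ (-u) dt`, and for `μ = n(s)/s ds` (that is, `dN`) it turns the last integral
into `u ∫ N(t) t ^ (-(u+1)) dt`, so that `Σ_j |z_j| ^ (-u) = u² ∫ N(t) / t ^ (u+1) dt`.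
-/

open MeasureTheory Filter intervalIntegral Set
open scoped ENNReal

lemma ofReal_mul_lintegral_Ici_rpow_neg_add_one {u c : ℝ} (hu : 0 < u) (hc : 0 < c) :
    ENNReal.ofReal u * ∫⁻ t in Ici c, ENNReal.ofReal (t ^ (-(u + 1))) =
      ENNReal.ofReal (c ^ (-u)) := by
  have hlt : -(u + 1) < -1 := by linarith
  rw [← restrict_Ioi_eq_restrict_Ici, ← ofReal_integral_eq_lintegral_ofReal
      (integrableOn_Ioi_rpow_of_lt hlt hc), ← ENNReal.ofReal_mul hu.le,
    integral_Ioi_rpow_of_lt hlt hc, show -(u + 1) + 1 = -u by ring]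
  · congr 1
    field_simp
  · filter_upwards [self_mem_ae_restrict measurableSet_Ioi] with t ht
    exact Real.rpow_nonneg (hc.trans ht).le _

theorem setLIntegral_Ioi_rpow_neg (μ : Measure ℝ) [SFinite μ] {a u : ℝ} (ha : 0 ≤ a)
    (hu : 0 < u) :
    ∫⁻ s in Ioi a, ENNReal.ofReal (s ^ (-u)) ∂μ =
      ENNReal.ofReal u * ∫⁻ t in Ioi a, μ (Ioc a t) * ENNReal.ofReal (t ^ (-(u + 1))) := by
  set w : ℝ → ℝ≥0∞ := fun t => ENNReal.ofReal (t ^ (-(u + 1)))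
  have hw : Measurable w := by fun_prop
  have hmeas : Measurable (Function.uncurry fun s t => (Ici s).indicator w t) := by
    have : (Function.uncurry fun s t => (Ici s).indicator w t) =
        {p : ℝ × ℝ | p.1 ≤ p.2}.indicator (fun p => w p.2) := by
      ext p
      simp only [Function.uncurry, indicator_apply, mem_Ici, mem_ofPred_eq]
    rw [this]
    exact (hw.comp measurable_snd).indicator
      (measurableSet_le measurable_fst measurable_snd : MeasurableSet {p : ℝ × ℝ | p.1 ≤ p.2})
  calc ∫⁻ s in Ioi a, ENNReal.ofReal (s ^ (-u)) ∂μ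
      = ∫⁻ s in Ioi a, ENNReal.ofReal u * (∫⁻ t in Ioi a, (Ici s).indicator w t) ∂μ := by
        refine setLIntegral_congr_fun measurableSet_Ioi fun s hs => ?_
        rw [lintegral_indicator measurableSet_Ici, Measure.restrict_restrict measurableSet_Ici,
          inter_eq_left.2 (Ici_subset_Ioi.2 hs),
          ofReal_mul_lintegral_Ici_rpow_neg_add_one hu (ha.trans_lt hs)]
    _ = ENNReal.ofReal u * ∫⁻ t in Ioi a, (∫⁻ s in Ioi a, (Ici s).indicator w t ∂μ) := by
        rw [lintegral_const_mul' _ _ ENNReal.ofReal_ne_top]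
        exact congrArg _ (lintegral_lintegral_swap hmeas.aemeasurable)
    _ = ENNReal.ofReal u * ∫⁻ t in Ioi a, μ (Ioc a t) * w t := by
        congr 1
        refine lintegral_congr fun t => ?_
        have hind : ∀ s, (Ici s).indicator w t = (Iic t).indicator (fun _ => w t) s := by
          intro s
          simp only [indicator_apply, mem_Ici, mem_Iic]
        simp_rw [hind]
        rw [lintegral_indicator_const measurableSet_Iic, Measure.restrict_apply measurableSet_Iic,
          inter_comm, Ioi_inter_Iic, mul_comm]

lemma setLIntegral_Ioi_map_count {x : ℕ → ℝ} {a : ℝ} (hx : ∀ j, a < x j) {f : ℝ → ℝ≥0∞}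
    (hf : Measurable f) : ∫⁻ s in Ioi a, f s ∂(Measure.count.map x) = ∑' j, f (x j) := by
  rw [setLIntegral_map measurableSet_Ioi hf measurable_from_nat,
    show x ⁻¹' Ioi a = univ from eq_univ_of_forall hx, Measure.restrict_univ, lintegral_count]

lemma map_count_Ioc {x : ℕ → ℝ} {a t : ℝ} (hx : ∀ j, a < x j) (hfin : {j | x j ≤ t}.Finite) :
    Measure.count.map x (Ioc a t) = Nat.card {j | x j ≤ t} := by
  have hpre : x ⁻¹' Ioc a t = {j | x j ≤ t} := by
    ext j
    simp [hx j]
  rw [Measure.map_apply measurable_from_nat measurableSet_Ioc,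
    Measure.count_apply (measurableSet_Ioc.preimage measurable_from_nat), hpre,
    Nat.card_coe_set_eq, ← hfin.cast_ncard_eq]
  rfl

theorem tsum_ofReal_rpow_neg_eq_lintegral_card {x : ℕ → ℝ} {a u : ℝ} (ha : 0 ≤ a) (hu : 0 < u)
    (hx : ∀ j, a < x j) (hfin : ∀ t, {j | x j ≤ t}.Finite) :
    ∑' j, ENNReal.ofReal (x j ^ (-u)) = ENNReal.ofReal u *
      ∫⁻ t in Ioi a, Nat.card {j | x j ≤ t} * ENNReal.ofReal (t ^ (-(u + 1))) := by
  rw [← setLIntegral_Ioi_map_count hx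
      (by fun_prop : Measurable fun s : ℝ => ENNReal.ofReal (s ^ (-u))),
    setLIntegral_Ioi_rpow_neg _ ha hu]
  simp only [map_count_Ioc hx (hfin _)]

lemma withDensity_ofReal_Ioc {f : ℝ → ℝ} {a t : ℝ} (hat : a ≤ t)
    (hf : IntervalIntegrable f volume a t) (hf0 : ∀ s ∈ Ioc a t, 0 ≤ f s) :
    volume.withDensity (fun s => ENNReal.ofReal (f s)) (Ioc a t) =
      ENNReal.ofReal (∫ s in a..t, f s) := by
  rw [withDensity_apply _ measurableSet_Ioc, integral_of_le hat,
    ofReal_integral_eq_lintegral_ofReal hf.1]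
  filter_upwards [self_mem_ae_restrict measurableSet_Ioc] with s hs
  exact hf0 s hs

theorem setLIntegral_ofReal_mul_rpow_neg_add_one {f : ℝ → ℝ} (hf : Monotone f)
    (hf0 : ∀ s, 0 ≤ f s) {a u : ℝ} (ha : 0 < a) (hu : 0 < u) :
    ∫⁻ t in Ioi a, ENNReal.ofReal (f t) * ENNReal.ofReal (t ^ (-(u + 1))) = ENNReal.ofReal u *
      ∫⁻ t in Ioi a, ENNReal.ofReal ((∫ s in a..t, f s / s) / t ^ (u + 1)) := by
  have hdens_nonneg : ∀ s, a ≤ s → 0 ≤ f s / s := fun s hs => div_nonneg (hf0 s) (ha.le.trans hs)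
  have hdens_int : ∀ t, a ≤ t → IntervalIntegrable (fun s => f s / s) volume a t :=
    fun t ht => by
      simpa only [div_eq_mul_inv] using hf.intervalIntegrable.mul_continuousOn
        (continuousOn_inv₀.mono fun s hs => (ha.trans_le (uIcc_of_le ht ▸ hs).1).ne')
  have hwd := setLIntegral_withDensity_eq_setLIntegral_mul volume
    (hf.measurable.div measurable_id).ennreal_ofReal
    (by fun_prop : Measurable fun s : ℝ => ENNReal.ofReal (s ^ (-u))) (measurableSet_Ioi (a := a))
  simp only [Pi.mul_apply, Pi.div_apply, id] at hwd
  calc ∫⁻ t in Ioi a, ENNReal.ofReal (f t) * ENNReal.ofReal (t ^ (-(u + 1)))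
      = ∫⁻ t in Ioi a, ENNReal.ofReal (f t / t) * ENNReal.ofReal (t ^ (-u)) := by
        refine setLIntegral_congr_fun measurableSet_Ioi fun t ht => ?_
        rw [← ENNReal.ofReal_mul (hf0 t), ← ENNReal.ofReal_mul (hdens_nonneg t ht.le),
          show -(u + 1) = -u - 1 by ring, Real.rpow_sub_one (ha.trans ht).ne']
        ring_nf
    _ = _ := by
        rw [← hwd, setLIntegral_Ioi_rpow_neg _ ha.le hu]
        congr 1
        refine setLIntegral_congr_fun measurableSet_Ioi fun t ht => ?_
        rw [withDensity_ofReal_Ioc ht.le (hdens_int t ht.le) fun s hs => hdens_nonneg s hs.1.le,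
          ← ENNReal.ofReal_mul (integral_nonneg ht.le fun s hs => hdens_nonneg s hs.1),
          Real.rpow_neg (ha.trans ht).le, div_eq_mul_inv]

lemma tsum_eq_of_tsum_ofReal_eq {ι : Type*} {f : ι → ℝ} (hf : ∀ i, 0 ≤ f i) {c : ℝ}
    (hc : 0 ≤ c) (h : ∑' i, ENNReal.ofReal (f i) = ENNReal.ofReal c) : ∑' i, f i = c := by
  rw [← ENNReal.toReal_ofReal hc, ← h, ENNReal.tsum_toReal_eq fun _ => ENNReal.ofReal_ne_top]
  simp only [ENNReal.toReal_ofReal (hf _)]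

theorem stmt_7_general (z : ℕ → ℂ) (r₀ u M : ℝ) (hr₀ : 0 < r₀) (hu : 0 < u)
    (hmod : ∀ j, r₀ < ‖z j‖)
    (hfin : ∀ t : ℝ, {j : ℕ | ‖z j‖ ≤ t}.Finite)
    (n : ℝ → ℕ) (hn : ∀ t, (n t : ℕ) = Nat.card {j : ℕ | ‖z j‖ ≤ t})
    (N : ℝ → ℝ) (hN : ∀ t, N t = ∫ s in r₀..t, (n s : ℝ) / s)
    (hint : IntegrableOn (fun t => N t / t ^ (u + 1)) (Set.Ioi r₀))
    (hM : ∫ t in Set.Ioi r₀, N t / t ^ (u + 1) ≤ M) :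
    ∑' j : ℕ, ‖z j‖ ^ (-u) ≤ u ^ 2 * M := by
  have hn_mono : Monotone fun t => (n t : ℝ) := fun s t hst => by
    show (n s : ℝ) ≤ n t
    rw [hn, hn]
    exact Nat.cast_le.2 (Nat.card_mono (hfin t) fun j hj => le_trans hj hst)
  have hquot_nonneg : ∀ t ∈ Ioi r₀, 0 ≤ N t / t ^ (u + 1) := fun t ht => by
    refine div_nonneg ?_ (Real.rpow_nonneg (hr₀.trans ht).le _)
    rw [hN]
    exact integral_nonneg ht.le fun s hs => div_nonneg (Nat.cast_nonneg _) (hr₀.le.trans hs.1)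
  have hsum_eq : ∑' j, ‖z j‖ ^ (-u) = u ^ 2 * ∫ t in Ioi r₀, N t / t ^ (u + 1) := by
    refine tsum_eq_of_tsum_ofReal_eq (fun j => Real.rpow_nonneg (norm_nonneg _) _)
      (mul_nonneg (sq_nonneg u) (setIntegral_nonneg measurableSet_Ioi hquot_nonneg)) ?_
    rw [tsum_ofReal_rpow_neg_eq_lintegral_card (x := fun j => ‖z j‖) hr₀.le hu hmod hfin]
    simp only [← hn, ← ENNReal.ofReal_natCast]
    rw [setLIntegral_ofReal_mul_rpow_neg_add_one hn_mono (fun _ => Nat.cast_nonneg _) hr₀ hu]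
    simp only [← hN]
    rw [← ofReal_integral_eq_lintegral_ofReal hint
        ((ae_restrict_mem measurableSet_Ioi).mono hquot_nonneg),
      ← mul_assoc, ← ENNReal.ofReal_mul hu.le, ← ENNReal.ofReal_mul (by positivity), sq]
  rw [hsum_eq]
  exact mul_le_mul_of_nonneg_left hM (sq_nonneg u)

/-- Quantitative Borel-sum bound: if `(z_j)` enumerates points with `|z_j| > r₀`,
`n(t) = #{j : |z_j| ≤ t}` is their (finite-valued) counting function,
`N(t) = ∫_{r₀}^t n(s)/s ds`, `n(t)/t^u → 0`, `N(t)/t^u → 0` as `t → ∞`, and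
`∫_{r₀}^∞ N(t)/t^{u+1} dt ≤ M`, then `Σ_j |z_j|^{-u} ≤ u² M`. -/
theorem stmt_7 (z : ℕ → ℂ) (r₀ u M : ℝ) (hr₀ : 0 < r₀) (hu : 0 < u)
    (hmod : ∀ j, r₀ < ‖z j‖)
    (hfin : ∀ t : ℝ, {j : ℕ | ‖z j‖ ≤ t}.Finite)
    (n : ℝ → ℕ) (hn : ∀ t, (n t : ℕ) = Nat.card {j : ℕ | ‖z j‖ ≤ t})
    (N : ℝ → ℝ) (hN : ∀ t, N t = ∫ s in r₀..t, (n s : ℝ) / s)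
    (hlim1 : Tendsto (fun t => (n t : ℝ) / t ^ u) atTop (nhds 0))
    (hlim2 : Tendsto (fun t => N t / t ^ u) atTop (nhds 0))
    (hint : IntegrableOn (fun t => N t / t ^ (u + 1)) (Set.Ioi r₀))
    (hM : ∫ t in Set.Ioi r₀, N t / t ^ (u + 1) ≤ M) :
    ∑' j : ℕ, ‖z j‖ ^ (-u) ≤ u ^ 2 * M :=
  stmt_7_general z r₀ u M hr₀ hu hmod hfin n hn N hN hint hM
end

section
/- Let m and L̂ satisfy: L̂ⁿ(1)(x) → ρ(x) uniformly on a set of full m-measure with ρ bounded, and suppose A is a Borel set such that for every n ≥ 0 there is a Borel set A_n with A = f^{-n}(A_n), where ∫_A ψ dm = ∫_{A_n} L̂ⁿψ dm for all bounded continuous ψ. If μ = ρ·m is a probability measure (∫ρ dm = 1), then ∫_A ψ dm = μ(A)·∫ψ dm for every bounded continuous ψ; in particular taking ψ = 1 gives m(A) = μ(A), and the measure B ↦ m(A∩B)/μ(A) (when μ(A) > 0) coincides with m, forcing m(Aᶜ) = 0. Hence every tail-measurable set A ∈ ⋂_n f^{-n}(𝔅) has m(A) ∈ {0,1}, i.e.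 the system is metrically exact. -/
/-!
Test the duality `∫_A ψ dm = ∫_{A_n} L̂ⁿψ dm` against `ψ = 1` and `ψ = 𝟙_A`. Since `L̂ⁿψ` is
uniformly close to `(∫ψ dm)·ρ`, the common value `a = m(A)` of `∫_A 1 dm` and `∫_A 𝟙_A dm` is
close both to `r = ∫_{A_n} ρ dm` and to `a·r`. Letting `n → ∞` gives `a = a²`.
-/

open MeasureTheory

theorem abs_sub_mul_self_le_of_abs_sub_le {a r ε : ℝ} (ha₀ : 0 ≤ a) (ha₁ : a ≤ 1)
    (hr : |a - r| ≤ ε) (har : |a - a * r| ≤ ε) : |a - a * a| ≤ 2 * ε := by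
  rw [abs_le] at *
  constructor <;> nlinarith

section

variable {X : Type*} [MeasurableSpace X] {m : Measure X}

/-- A nonzero integral certifies integrability, so no regularity of `h` is needed. -/
theorem abs_setIntegral_sub_const_mul_le [IsFiniteMeasure m] {h ρ : X → ℝ} {B : Set X}
    {c ε : ℝ} (hh : ∫ x in B, h x ∂m ≠ 0) (hρ : Integrable ρ (m.restrict B))
    (hclose : ∀ x, |h x - c * ρ x| ≤ ε) :
    |∫ x in B, h x ∂m - c * ∫ x in B, ρ x ∂m| ≤ ε * m.real B := by
  rw [← integral_const_mul, ← integral_sub (.of_integral_ne_zero hh) (hρ.const_mul c)]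
  exact norm_setIntegral_le_of_norm_le_const (measure_lt_top m B) fun x _ =>
    (Real.norm_eq_abs _).trans_le (hclose x)

theorem abs_measureReal_sub_mul_setIntegral_le [IsProbabilityMeasure m] {h ψ ρ : X → ℝ}
    {A B : Set X} {ε : ℝ} (hε : 0 ≤ ε) (hA : m.real A ≠ 0)
    (hψA : ∫ x in A, ψ x ∂m = m.real A) (hdual : ∫ x in A, ψ x ∂m = ∫ x in B, h x ∂m)
    (hρ : Integrable ρ (m.restrict B)) (hclose : ∀ x, |h x - (∫ y, ψ y ∂m) * ρ x| ≤ ε) :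
    |m.real A - (∫ y, ψ y ∂m) * ∫ x in B, ρ x ∂m| ≤ ε := by
  rw [← hψA, hdual] at hA ⊢
  exact (abs_setIntegral_sub_const_mul_le hA hρ hclose).trans
    (mul_le_of_le_one_right hε measureReal_le_one)

end

theorem stmt_14_general {X : Type*} [MeasurableSpace X] (m : Measure X) [IsProbabilityMeasure m]
    (f : X → X)
    (L : (X → ℝ) → (X → ℝ)) (ρ : X → ℝ)
    (hρm : Measurable ρ) (hρb : ∃ Cρ : ℝ, ∀ x, |ρ x| ≤ Cρ)
    (hconv : ∀ ψ : X → ℝ, Measurable ψ → (∃ Cψ : ℝ, ∀ x, |ψ x| ≤ Cψ) →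
      ∀ ε : ℝ, 0 < ε → ∃ Nε : ℕ, ∀ n ≥ Nε, ∀ x,
        |L^[n] ψ x - (∫ y, ψ y ∂m) * ρ x| ≤ ε)
    (A : Set X) (hA : MeasurableSet A)
    (hAn : ∀ n : ℕ, ∃ B : Set X, MeasurableSet B ∧ A = f^[n] ⁻¹' B ∧
      ∀ ψ : X → ℝ, Measurable ψ → (∃ Cψ : ℝ, ∀ x, |ψ x| ≤ Cψ) →
        ∫ x in A, ψ x ∂m = ∫ x in B, L^[n] ψ x ∂m) :
    m A = 0 ∨ m A = 1 := by
  obtain ⟨Cρ, hCρ⟩ := hρb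
  rcases eq_or_ne (m.real A) 0 with hA₀ | hA₀
  · exact .inl ((measureReal_eq_zero_iff).mp hA₀)
  have h1m : Measurable (1 : X → ℝ) := measurable_one
  have h1b : ∃ C : ℝ, ∀ x, |(1 : X → ℝ) x| ≤ C := ⟨1, by simp⟩
  have hindm : Measurable (A.indicator 1 : X → ℝ) := measurable_one.indicator hA
  have hindb : ∃ C : ℝ, ∀ x, |A.indicator (1 : X → ℝ) x| ≤ C :=
    ⟨1, fun x => by by_cases hx : x ∈ A <;> simp [hx]⟩
  have hidem : m.real A = m.real A * m.real A := eq_of_forall_dist_le fun ε hε => by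
    obtain ⟨N₁, hN₁⟩ := hconv 1 h1m h1b (ε / 2) (by positivity)
    obtain ⟨N₂, hN₂⟩ := hconv (A.indicator 1) hindm hindb (ε / 2) (by positivity)
    obtain ⟨B, -, -, hdual⟩ := hAn (max N₁ N₂)
    have hρB : Integrable ρ (m.restrict B) :=
      .of_bound hρm.aestronglyMeasurable Cρ (ae_of_all _ hCρ)
    have hr := abs_measureReal_sub_mul_setIntegral_le (by positivity) hA₀ (by simp)
      (hdual 1 h1m h1b) hρB (hN₁ _ (le_max_left _ _))
    have har := abs_measureReal_sub_mul_setIntegral_le (by positivity) hA₀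
      (by simp [setIntegral_indicator hA]) (hdual _ hindm hindb) hρB (hN₂ _ (le_max_right _ _))
    rw [integral_indicator_one hA] at har
    simp only [Pi.one_apply, integral_const, probReal_univ, smul_eq_mul, one_mul] at hr
    rw [Real.dist_eq]
    linarith [abs_sub_mul_self_le_of_abs_sub_le measureReal_nonneg measureReal_le_one hr har]
  have h1 : m.real A = 1 := mul_left_cancel₀ hA₀ (by rw [mul_one, ← hidem])
  exact .inr ((ENNReal.toReal_eq_one_iff _).mp h1)

/-- Metric exactness from the spectral gap: let `m` be a probability measure, `L̂` a
normalized transfer operator whose iterates `L̂ⁿψ` converge uniformly to `(∫ψ dm)·ρ`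
for all bounded measurable `ψ`, where the density `ρ` is bounded with `∫ρ dm = 1`.
If `A` is a measurable set such that for every `n` there is a measurable `A_n` with
`A = f^{-n}(A_n)` and the duality `∫_A ψ dm = ∫_{A_n} L̂ⁿψ dm` holds for all bounded
measurable `ψ`, then `m(A) ∈ {0,1}`. -/
theorem stmt_14 {X : Type*} [MeasurableSpace X] (m : Measure X) [IsProbabilityMeasure m]
    (f : X → X) (hf : Measurable f)
    (L : (X → ℝ) → (X → ℝ)) (ρ : X → ℝ)
    (hρm : Measurable ρ) (hρb : ∃ Cρ : ℝ, ∀ x, |ρ x| ≤ Cρ)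
    (hρint : ∫ x, ρ x ∂m = 1)
    (hconv : ∀ ψ : X → ℝ, Measurable ψ → (∃ Cψ : ℝ, ∀ x, |ψ x| ≤ Cψ) →
      ∀ ε : ℝ, 0 < ε → ∃ Nε : ℕ, ∀ n ≥ Nε, ∀ x,
        |L^[n] ψ x - (∫ y, ψ y ∂m) * ρ x| ≤ ε)
    (A : Set X) (hA : MeasurableSet A)
    (hAn : ∀ n : ℕ, ∃ B : Set X, MeasurableSet B ∧ A = f^[n] ⁻¹' B ∧
      ∀ ψ : X → ℝ, Measurable ψ → (∃ Cψ : ℝ, ∀ x, |ψ x| ≤ Cψ) →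
        ∫ x in A, ψ x ∂m = ∫ x in B, L^[n] ψ x ∂m) :
    m A = 0 ∨ m A = 1 :=
  stmt_14_general m f L ρ hρm hρb hconv A hA hAn
end

section
/- Let L̂ : C_b(J) → C_b(J) be a positive bounded linear operator with L̂1 ≤ L on J, and suppose L̂ⁿ1(w) ≤ 1 whenever |w| ≥ R₀ (tail smallness) and ∫ L̂ⁿ1 dm = 1 for a Borel probability measure m with m(D(0,R₀)) > 0, together with the Harnack-type comparison L̂ⁿ1(w₁) ≤ K·L̂ⁿ1(w₂) for all w₁, w₂ ∈ J ∩ D(0,R₀) and all n. Then sup_n ‖L̂ⁿ1‖_∞ ≤ max(L, K/m(D(0,R₀))): by induction, if the sup of L̂^{n+1}1 is attained at a point w with |w| ≥ R₀ then L̂^{n+1}1(w) ≤ ‖L̂ⁿ1‖_∞·L̂1(w) ≤ ‖L̂ⁿ1‖_∞, while if |w| < R₀ then 1 = ∫L̂^{n+1}1 dm ≥ K^{-1} L̂^{n+1}1(w)·m(D(0,R₀)). -/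
/-!
Write `gₙ = L̂ⁿ1`. On the disc, integrating the Harnack inequality `gₙ(w) ≤ K gₙ(x)`
over `x ∈ J ∩ D(0,R₀)` against the normalization `∫ gₙ dm = 1` gives
`gₙ(w) ≤ K / m(J ∩ D(0,R₀))`. Off the disc, `L̂1 ≤ 1` together with
`g_{n+1} ≤ ‖gₙ‖_∞ · L̂1` propagates the bound from `gₙ` to `g_{n+1}`, so it holds for all `n`
by induction.
-/

open MeasureTheory Metric Set

theorem measureReal_mul_le_mul_setIntegral_of_le_mul {α : Type*} [MeasurableSpace α]
    {μ : Measure α} [IsFiniteMeasure μ] {s t : Set α} {f : α → ℝ} {K : ℝ} {w : α}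
    (hs : MeasurableSet s) (ht : MeasurableSet t) (hst : s ⊆ t) (hK : 0 ≤ K)
    (hf : ∀ x ∈ t, 0 ≤ f x) (hft : IntegrableOn f t μ) (hw : ∀ x ∈ s, f w ≤ K * f x) :
    μ.real s * f w ≤ K * ∫ x in t, f x ∂μ :=
  calc μ.real s * f w = ∫ _ in s, f w ∂μ := by rw [setIntegral_const, smul_eq_mul]
    _ ≤ ∫ x in s, K * f x ∂μ :=
      setIntegral_mono_on (integrable_const _) ((hft.mono_set hst).const_mul K) hs hw
    _ = K * ∫ x in s, f x ∂μ := integral_const_mul K _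
    _ ≤ K * ∫ x in t, f x ∂μ :=
      mul_le_mul_of_nonneg_left
        (setIntegral_mono_set hft (ae_restrict_of_forall_mem ht hf) hst.eventuallyLE) hK

theorem forall_le_of_le_sSup_mul {α : Type*} {J C : Set α} {g : ℕ → α → ℝ} {M : ℝ}
    (hg0 : ∀ w ∈ J, g 0 w ≤ M) (hgnn : ∀ n, ∀ w ∈ J, 0 ≤ g n w)
    (hbdd : ∀ n, BddAbove (g n '' J))
    (hchain : ∀ n, ∀ w ∈ J, g (n + 1) w ≤ sSup (g n '' J) * g 1 w)
    (htail : ∀ w ∈ J, w ∉ C → g 1 w ≤ 1) (hcore : ∀ n, ∀ w ∈ J, w ∈ C → g n w ≤ M) :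
    ∀ n, ∀ w ∈ J, g n w ≤ M := by
  intro n
  induction n with
  | zero => exact hg0
  | succ n ih =>
    intro w hw
    by_cases hwC : w ∈ C
    · exact hcore _ w hw hwC
    have hsup_le : sSup (g n '' J) ≤ M :=
      csSup_le ⟨_, mem_image_of_mem _ hw⟩ (forall_mem_image.2 ih)
    have hsup_nonneg : 0 ≤ sSup (g n '' J) :=
      (hgnn n w hw).trans (le_csSup (hbdd n) (mem_image_of_mem _ hw))
    calc g (n + 1) w ≤ sSup (g n '' J) * g 1 w := hchain n w hw
      _ ≤ sSup (g n '' J) := mul_le_of_le_one_right hsup_nonneg (htail w hw hwC)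
      _ ≤ M := hsup_le

theorem stmt_17_general (J : Set ℂ) (hJ : MeasurableSet J)
    (m : Measure ℂ) [IsProbabilityMeasure m]
    (g : ℕ → ℂ → ℝ) (L K R₀ : ℝ) (hK : 1 ≤ K)
    (hg0 : ∀ w ∈ J, g 0 w = 1)
    (hgnn : ∀ n, ∀ w ∈ J, 0 ≤ g n w)
    (hbdd : ∀ n, BddAbove (g n '' J))
    (hchain : ∀ n, ∀ w ∈ J, g (n + 1) w ≤ sSup (g n '' J) * g 1 w)
    (htail : ∀ w ∈ J, R₀ ≤ ‖w‖ → g 1 w ≤ 1)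
    (hint : ∀ n, ∫ w in J, g n w ∂m = 1)
    (hharnack : ∀ n, ∀ w₁ ∈ J ∩ ball 0 R₀, ∀ w₂ ∈ J ∩ ball 0 R₀,
      g n w₁ ≤ K * g n w₂)
    (hpos : 0 < m (J ∩ ball 0 R₀)) :
    ∀ n, ∀ w ∈ J, g n w ≤ max L (K / (m (J ∩ ball 0 R₀)).toReal) := by
  have hdisc_pos : 0 < m.real (J ∩ ball 0 R₀) :=
    ENNReal.toReal_pos hpos.ne' (measure_ne_top _ _)
  have hcore : ∀ n, ∀ w ∈ J, w ∈ ball 0 R₀ → g n w ≤ K / m.real (J ∩ ball 0 R₀) := by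
    intro n w hw hwR
    have hgJ : IntegrableOn (g n) J m :=
      Integrable.of_integral_ne_zero (by rw [hint n]; exact one_ne_zero)
    have hmean := measureReal_mul_le_mul_setIntegral_of_le_mul (hJ.inter measurableSet_ball) hJ
      inter_subset_left (zero_le_one.trans hK) (hgnn n) hgJ (hharnack n w ⟨hw, hwR⟩)
    rw [hint n, mul_one] at hmean
    rwa [le_div_iff₀' hdisc_pos]
  have hbase : ∀ w ∈ J, g 0 w ≤ K / m.real (J ∩ ball 0 R₀) := fun w hw =>
    (hg0 w hw).trans_le <|
      hK.trans (le_div_self (zero_le_one.trans hK) hdisc_pos measureReal_le_one)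
  intro n w hw
  refine le_max_of_le_right (forall_le_of_le_sSup_mul hbase hgnn hbdd hchain ?_ hcore n w hw)
  intro v hv hvR
  exact htail v hv (by simpa using hvR)

/-- Uniform upper bound for the iterates `gₙ = L̂ⁿ1` of a normalized transfer
operator: assuming `L̂1 ≤ L`, the tail bound `L̂1(w) ≤ 1` for `|w| ≥ R₀`, the
normalization `∫ L̂ⁿ1 dm = 1`, and the Harnack comparison
`L̂ⁿ1(w₁) ≤ K·L̂ⁿ1(w₂)` on `J ∩ D(0,R₀)`, one gets
`sup_n ‖L̂ⁿ1‖_∞ ≤ max(L, K/m(J ∩ D(0,R₀)))`. -/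
theorem stmt_17 (J : Set ℂ) (hJ : MeasurableSet J)
    (m : Measure ℂ) [IsProbabilityMeasure m] (hmJ : m J = 1)
    (g : ℕ → ℂ → ℝ) (L K R₀ : ℝ) (hK : 1 ≤ K) (hR₀ : 0 < R₀)
    (hmeas : ∀ n, Measurable (g n))
    (hg0 : ∀ w ∈ J, g 0 w = 1)
    (hgnn : ∀ n, ∀ w ∈ J, 0 ≤ g n w)
    (hbdd : ∀ n, BddAbove (g n '' J))
    (hattain : ∀ n, ∃ w ∈ J, g n w = sSup (g n '' J))
    (hchain : ∀ n, ∀ w ∈ J, g (n + 1) w ≤ sSup (g n '' J) * g 1 w)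
    (hL : ∀ w ∈ J, g 1 w ≤ L)
    (htail : ∀ w ∈ J, R₀ ≤ ‖w‖ → g 1 w ≤ 1)
    (hint : ∀ n, ∫ w in J, g n w ∂m = 1)
    (hharnack : ∀ n, ∀ w₁ ∈ J ∩ ball 0 R₀, ∀ w₂ ∈ J ∩ ball 0 R₀,
      g n w₁ ≤ K * g n w₂)
    (hpos : 0 < m (J ∩ ball 0 R₀)) :
    ∀ n, ∀ w ∈ J, g n w ≤ max L (K / (m (J ∩ ball 0 R₀)).toReal) :=
  stmt_17_general J hJ m g L K R₀ hK hg0 hgnn hbdd hchain htail hint hharnack hpos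
end
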